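/- arXiv:2304.07252 — 2 statements merged into one kernel-verified Lean document; each statement's English description precedes it below -/
import Mathlib

section
/- Let a, ã, b, b̃ ∈ L^∞(T) with {a,b} and {ã,b̃} nondegenerate. Then Σ_{a,b} Σ_{ã,b̃} = Σ_{aã, bb̃} if and only if a ∈ conj(H^∞) and b ∈ H^∞. -/
open MeasureTheory Complex Real AddCircle
open scoped ENNReal ComplexConjugate

noncomputable section

instance : Fact (0 < 2 * π) := ⟨by positivity⟩

/-- Normalized Haar (Lebesgue) measure on the unit circle, realized as `AddCircle (2π)`. -/
abbrev μT : Measure (AddCircle (2 * π)) := AddCircle.haarAddCircle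

/-- The Lebesgue space `L²(𝕋)`. -/
abbrev L2 : Type := Lp ℂ 2 μT

/-- The space `L^∞(𝕋)`. -/
abbrev Linf : Type := Lp ℂ ∞ μT

/-- Multiplication of an `L²` function by an `L^∞` function, as an element of `L²`. -/
def mul2 (a : Linf) (f : L2) : L2 :=
  ((Lp.memLp f).smul (Lp.memLp a)).toLp ((a : AddCircle (2 * π) → ℂ) • (f : AddCircle (2 * π) → ℂ))

lemma mul2_coe (a : Linf) (f : L2) :
    (mul2 a f : AddCircle (2 * π) → ℂ) =ᵐ[μT] fun x => a x * f x :=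
  (MemLp.coeFn_toLp _)

/-- Multiplication in `L^∞`. -/
def mulInf (a b : Linf) : Linf :=
  ((Lp.memLp b).smul (Lp.memLp a)).toLp ((a : AddCircle (2 * π) → ℂ) • (b : AddCircle (2 * π) → ℂ))

lemma mulInf_coe (a b : Linf) :
    (mulInf a b : AddCircle (2 * π) → ℂ) =ᵐ[μT] fun x => a x * b x :=
  (MemLp.coeFn_toLp _)

/-- Complex conjugation on `Lp`. -/
def conjLp {p : ℝ≥0∞} [Fact (1 ≤ p)] (f : Lp ℂ p μT) : Lp ℂ p μT :=
  MemLp.toLp (fun x => conj (f x))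
    ⟨continuous_star.comp_aestronglyMeasurable (Lp.aestronglyMeasurable f),
      by
        rw [eLpNorm_congr_norm_ae (g := (f : AddCircle (2 * π) → ℂ))
          (Filter.Eventually.of_forall fun x => by simp)]
        exact (Lp.memLp f).2⟩

lemma conjLp_coe {p : ℝ≥0∞} [Fact (1 ≤ p)] (f : Lp ℂ p μT) :
    (conjLp f : AddCircle (2 * π) → ℂ) =ᵐ[μT] fun x => conj (f x) :=
  (MemLp.coeFn_toLp _)

/-- The Hardy space `H²`, as the subspace of `L²(𝕋)` of functions whose negative Fourier
coefficients vanish. -/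
def Hardy : Submodule ℂ L2 where
  carrier := {f | ∀ n : ℤ, n < 0 → fourierBasis.repr f n = 0}
  add_mem' := fun hf hg n hn => by simp [hf n hn, hg n hn]
  zero_mem' := fun n hn => by simp
  smul_mem' := fun c f hf n hn => by simp [hf n hn]

lemma hardy_isClosed : IsClosed (Hardy : Set L2) := by
  have h : (Hardy : Set L2)
      = ⋂ n : ℤ, ⋂ _ : n < 0, {f : L2 | fourierBasis.repr f n = 0} := by
    ext f
    simp [Hardy, Set.mem_iInter]
  rw [h]
  refine isClosed_iInter fun n => isClosed_iInter fun hn => ?_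
  have hc : Continuous fun f : L2 => fourierBasis.repr f n := by
    have : (fun f : L2 => fourierBasis.repr f n)
        = fun f : L2 => (innerSL ℂ (fourierBasis n : L2)) f := by
      ext f
      rw [HilbertBasis.repr_apply_apply]
      rfl
    rw [this]
    exact (innerSL ℂ (fourierBasis n : L2)).continuous
  exact isClosed_eq hc continuous_const

instance : CompleteSpace Hardy := hardy_isClosed.completeSpace_coe

/-- The Riesz projection `P⁺ : L² → L²`, i.e. the orthogonal projection onto `H²`. -/
def Pplus : L2 →L[ℂ] L2 := Hardy.subtypeL.comp Hardy.orthogonalProjectionOnto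

/-- The complementary projection `P⁻ = I - P⁺`. -/
def Pminus : L2 →L[ℂ] L2 := ContinuousLinearMap.id ℂ L2 - Pplus

lemma mul2_norm_le (a : Linf) (f : L2) : ‖mul2 a f‖ ≤ ‖a‖ * ‖f‖ := by
  rw [mul2, Lp.norm_toLp]
  have h := eLpNorm_smul_le_eLpNorm_top_mul_eLpNorm 2
    (Lp.aestronglyMeasurable f) (φ := (a : AddCircle (2 * π) → ℂ))
  refine le_trans (ENNReal.toReal_mono ?_ h) ?_
  · exact ENNReal.mul_ne_top (Lp.memLp a).2.ne (Lp.memLp f).2.ne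
  · rw [ENNReal.toReal_mul, Lp.norm_def, Lp.norm_def]

/-- Multiplication by an `L^∞` function `a`, as a bounded operator `M_a` on `L²`. -/
def Mult (a : Linf) : L2 →L[ℂ] L2 :=
  LinearMap.mkContinuous
    { toFun := mul2 a
      map_add' := fun f g => by
        refine Lp.ext ?_
        filter_upwards [mul2_coe a (f + g), mul2_coe a f, mul2_coe a g,
          Lp.coeFn_add f g, Lp.coeFn_add (mul2 a f) (mul2 a g)] with x h1 h2 h3 h4 h5
        simp only [h1, h5, Pi.add_apply, h2, h3, h4, mul_add]
      map_smul' := fun c f => by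
        refine Lp.ext ?_
        filter_upwards [mul2_coe a (c • f), mul2_coe a f,
          Lp.coeFn_smul c f, Lp.coeFn_smul c (mul2 a f)] with x h1 h2 h3 h4
        simp only [h1, h4, Pi.smul_apply, h2, h3, smul_eq_mul, RingHom.id_apply]
        ring }
    ‖a‖ (fun f => mul2_norm_le a f)

/-- The paired operator `S_{a,b} = a P⁺ + b P⁻` on `L²(𝕋)`. -/
def pairedS (a b : Linf) : L2 →L[ℂ] L2 :=
  (Mult a).comp Pplus + (Mult b).comp Pminus

/-- The transposed paired operator `Σ_{a,b} = P⁺ a + P⁻ b` on `L²(𝕋)`. -/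
def pairedSigma (a b : Linf) : L2 →L[ℂ] L2 :=
  Pplus.comp (Mult a) + Pminus.comp (Mult b)

/-- Membership in `H^∞`: an `L^∞` function whose negative Fourier coefficients vanish. -/
def MemHinf (a : Linf) : Prop := ∀ n : ℤ, n < 0 → fourierCoeff (a : AddCircle (2 * π) → ℂ) n = 0

/-- A pair `{a,b}` is nondegenerate if `a`, `b` and `a - b` are all nonzero a.e. on `𝕋`. -/
def Nondegenerate (a b : Linf) : Prop :=
  (∀ᵐ x ∂μT, a x ≠ 0) ∧ (∀ᵐ x ∂μT, b x ≠ 0) ∧ (∀ᵐ x ∂μT, a x - b x ≠ 0)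

/-!
Since `M_{aã} = M_a M_ã`, expanding with `P⁻ = 1 - P⁺` gives
`Σ_{a,b} Σ_{ã,b̃} - Σ_{aã,bb̃} = (P⁻ b P⁺ - P⁺ a P⁻) (ã - b̃)`.
Multiplication by `ã - b̃`, which is nonzero a.e., has an injective adjoint, so it cancels on
the right. The two remaining terms take values in the orthogonal spaces `(H²)ᗮ` and `H²`, so both
vanish. Now `P⁻ b P⁺ = 0` says that `b` maps `H²` into itself, i.e. `b ∈ H^∞` (test on `1`), and
`P⁺ a P⁻ = 0` says that `a` maps `(H²)ᗮ` into itself, which by passing to adjoints means that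
`conj a` maps `H²` into itself.
-/

theorem HilbertBasis.apply_mem_of_repr_eq_zero {ι 𝕜 E F : Type*} [RCLike 𝕜]
    [NormedAddCommGroup E] [InnerProductSpace 𝕜 E] [NormedAddCommGroup F] [NormedSpace 𝕜 F]
    (b : HilbertBasis ι 𝕜 E) (T : E →L[𝕜] F) {K : Submodule 𝕜 F} (hK : IsClosed (K : Set F))
    {s : Set ι} (hT : ∀ i ∈ s, T (b i) ∈ K) {x : E} (hx : ∀ i ∉ s, b.repr x i = 0) :
    T x ∈ K := by
  refine hK.mem_of_tendsto ((b.hasSum_repr x).mapL T) (Filter.Eventually.of_forall fun t => ?_)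
  refine K.sum_mem fun i _ => ?_
  by_cases hi : i ∈ s
  · simpa using K.smul_mem (b.repr x i) (hT i hi)
  · simp [hx i hi]

namespace Submodule

variable {𝕜 E : Type*} [RCLike 𝕜] [NormedAddCommGroup E] [InnerProductSpace 𝕜 E]
  (K : Submodule 𝕜 E) [K.HasOrthogonalProjection]

theorem orthogonal_starProjection_mul_eq_starProjection_mul_iff (S T : E →L[𝕜] E) :
    Kᗮ.starProjection * S = K.starProjection * T ↔
      Kᗮ.starProjection * S = 0 ∧ K.starProjection * T = 0 := by
  refine ⟨fun h => ?_, fun h => by rw [h.1, h.2]⟩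
  have hS : Kᗮ.starProjection * S = 0 := by
    ext f
    have hK : (Kᗮ.starProjection * S) f ∈ K := by
      rw [h]; exact K.starProjection_apply_mem _
    have hKperp : (Kᗮ.starProjection * S) f ∈ Kᗮ := Kᗮ.starProjection_apply_mem _
    exact disjoint_def.mp K.orthogonal_disjoint _ hK hKperp
  exact ⟨hS, h ▸ hS⟩

theorem orthogonal_starProjection_mul_mul_starProjection_eq_zero_iff (T : E →L[𝕜] E) :
    Kᗮ.starProjection * (T * K.starProjection) = 0 ↔
      K ∈ Module.End.invtSubmodule (T : E →ₗ[𝕜] E) := by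
  rw [Module.End.mem_invtSubmodule_iff_forall_mem_of_mem]
  constructor
  · intro h f hf
    have hf' : Kᗮ.starProjection (T (K.starProjection f)) = 0 := congr($h f)
    rwa [starProjection_apply_eq_zero_iff, K.orthogonal_orthogonal,
      K.starProjection_eq_self_iff.mpr hf] at hf'
  · intro h
    ext f
    change Kᗮ.starProjection (T (K.starProjection f)) = 0
    rw [starProjection_apply_eq_zero_iff, K.orthogonal_orthogonal]
    exact h _ (K.starProjection_apply_mem f)

theorem starProjection_mul_mul_orthogonal_starProjection_eq_zero_iff (T : E →L[𝕜] E) :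
    K.starProjection * (T * Kᗮ.starProjection) = 0 ↔
      Kᗮ ∈ Module.End.invtSubmodule (T : E →ₗ[𝕜] E) := by
  simpa only [K.orthogonal_orthogonal] using
    Kᗮ.orthogonal_starProjection_mul_mul_starProjection_eq_zero_iff T

end Submodule

theorem fourierCoeff_mul_fourier {T : ℝ} [Fact (0 < T)] (f : AddCircle T → ℂ) (n m : ℤ) :
    fourierCoeff (fun x => f x * fourier n x) m = fourierCoeff f (m - n) := by
  unfold fourierCoeff
  congr 1
  ext x
  rw [show -(m - n) = -m + n by ring, fourier_add, smul_eq_mul, smul_eq_mul]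
  ring

lemma mult_mulInf (c d : Linf) : Mult (mulInf c d) = Mult c * Mult d := by
  ext1 f
  change mul2 (mulInf c d) f = mul2 c (mul2 d f)
  refine Lp.ext ?_
  filter_upwards [mul2_coe (mulInf c d) f, mulInf_coe c d, mul2_coe c (mul2 d f),
    mul2_coe d f] with x hcd_f hcd hc_df hd_f
  rw [hcd_f, hc_df, hcd, hd_f, mul_assoc]

lemma mult_sub (c d : Linf) : Mult (c - d) = Mult c - Mult d := by
  ext1 f
  change mul2 (c - d) f = mul2 c f - mul2 d f
  refine Lp.ext ?_
  filter_upwards [mul2_coe (c - d) f, mul2_coe c f, mul2_coe d f, Lp.coeFn_sub c d,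
    Lp.coeFn_sub (mul2 c f) (mul2 d f)] with x hcd_f hc_f hd_f hcd hsub
  rw [hcd_f, hsub, Pi.sub_apply, hc_f, hd_f, hcd, Pi.sub_apply, sub_mul]

lemma adjoint_mult (c : Linf) : ContinuousLinearMap.adjoint (Mult c) = Mult (conjLp c) := by
  refine ((ContinuousLinearMap.eq_adjoint_iff _ _).mpr fun f g => ?_).symm
  rw [L2.inner_def, L2.inner_def]
  refine integral_congr_ae ?_
  filter_upwards [mul2_coe (conjLp c) f, mul2_coe c g, conjLp_coe c] with x hcf hcg hc
  change inner ℂ (mul2 (conjLp c) f x) (g x) = inner ℂ (f x) (mul2 c g x)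
  rw [RCLike.inner_apply, RCLike.inner_apply, hcf, hcg, hc, map_mul, Complex.conj_conj]
  ring

lemma mult_injective {c : Linf} (hc : ∀ᵐ x ∂μT, c x ≠ 0) : Function.Injective (Mult c) := by
  refine (injective_iff_map_eq_zero (Mult c)).mpr fun f hf => Lp.ext ?_
  have hcf : (fun x => c x * f x) =ᵐ[μT] 0 := by
    refine (mul2_coe c f).symm.trans ?_
    rw [show mul2 c f = 0 from hf]
    exact Lp.coeFn_zero ℂ 2 μT
  filter_upwards [hcf, hc, Lp.coeFn_zero ℂ 2 μT] with x hcfx hcx h0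
  rw [h0]
  exact (mul_eq_zero.mp hcfx).resolve_left hcx

lemma mul_mult_eq_zero_iff {c : Linf} (hc : ∀ᵐ x ∂μT, c x ≠ 0) (T : L2 →L[ℂ] L2) :
    T * Mult c = 0 ↔ T = 0 := by
  refine ⟨fun h => ?_, fun h => by rw [h, zero_mul]⟩
  have hconj : ∀ᵐ x ∂μT, conjLp c x ≠ 0 := by
    filter_upwards [conjLp_coe c, hc] with x hx hcx
    simpa [hx] using hcx
  have h' : Mult (conjLp c) * star T = 0 := by
    rw [← adjoint_mult, ← ContinuousLinearMap.star_eq_adjoint, ← star_mul, h, star_zero]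
  rw [← star_eq_zero]
  ext1 f
  exact mult_injective hconj (by simpa using congr($h' f))

lemma fourierBasis_repr_mult (c : Linf) (n m : ℤ) :
    fourierBasis.repr (Mult c (fourierBasis n)) m = fourierCoeff c (m - n) := by
  have hce : (Mult c (fourierBasis n) : AddCircle (2 * π) → ℂ) =ᵐ[μT]
      fun x => c x * fourier n x := by
    filter_upwards [mul2_coe c (fourierBasis n), coeFn_fourierLp 2 n] with x hcx hx
    rw [← hx, ← coe_fourierBasis]
    exact hcx
  rw [fourierBasis_repr, fourierCoeff_congr_ae hce, fourierCoeff_mul_fourier]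

lemma fourierBasis_mem_hardy {n : ℤ} (hn : 0 ≤ n) : (fourierBasis n : L2) ∈ Hardy := by
  intro m hm
  rw [fourierBasis.repr_self]
  exact lp.single_apply_ne (E := fun _ : ℤ => ℂ) 2 n 1 (show m ≠ n by omega)

theorem memHinf_iff_hardy_mem_invtSubmodule (b : Linf) :
    MemHinf b ↔ Hardy ∈ Module.End.invtSubmodule (Mult b : L2 →ₗ[ℂ] L2) := by
  rw [Module.End.mem_invtSubmodule_iff_forall_mem_of_mem]
  refine ⟨fun hb f hf => ?_, fun h n hn => ?_⟩
  · refine fourierBasis.apply_mem_of_repr_eq_zero (Mult b) hardy_isClosed (s := {n | 0 ≤ n})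
      (fun k (hk : 0 ≤ k) m hm => ?_) (fun m hm => hf m (not_le.mp hm))
    rw [fourierBasis_repr_mult]
    exact hb _ (by omega)
  · rw [← sub_zero n, ← fourierBasis_repr_mult]
    exact h _ (fourierBasis_mem_hardy le_rfl) n hn

theorem memHinf_conjLp_iff_hardy_orthogonal_mem_invtSubmodule (a : Linf) :
    MemHinf (conjLp a) ↔ Hardyᗮ ∈ Module.End.invtSubmodule (Mult a : L2 →ₗ[ℂ] L2) := by
  rw [memHinf_iff_hardy_mem_invtSubmodule, ← adjoint_mult,
    ContinuousLinearMap.mem_invtSubmodule_adjoint_iff]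

lemma pplus_eq_starProjection : Pplus = Hardy.starProjection := rfl

lemma pminus_eq_starProjection : Pminus = Hardyᗮ.starProjection :=
  (Hardy.starProjection_orthogonal).symm

lemma pairedSigma_comp_sub_pairedSigma_mulInf (a b ta tb : Linf) :
    (pairedSigma a b).comp (pairedSigma ta tb) - pairedSigma (mulInf a ta) (mulInf b tb)
      = (Pminus * (Mult b * Pplus) - Pplus * (Mult a * Pminus)) * Mult (ta - tb) := by
  simp only [pairedSigma, ← ContinuousLinearMap.mul_def, mult_mulInf, mult_sub, Pminus,
    ← ContinuousLinearMap.one_def]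
  noncomm_ring

theorem statement6_general (a b ta tb : Linf)
    (h2 : Nondegenerate ta tb) :
    (pairedSigma a b).comp (pairedSigma ta tb) = pairedSigma (mulInf a ta) (mulInf b tb)
      ↔ MemHinf (conjLp a) ∧ MemHinf b := by
  have hdiff : ∀ᵐ x ∂μT, (ta - tb : Linf) x ≠ 0 := by
    filter_upwards [h2.2.2, Lp.coeFn_sub ta tb] with x hx hsub
    rwa [hsub]
  rw [← sub_eq_zero, pairedSigma_comp_sub_pairedSigma_mulInf, mul_mult_eq_zero_iff hdiff,
    sub_eq_zero, pplus_eq_starProjection, pminus_eq_starProjection,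
    Submodule.orthogonal_starProjection_mul_eq_starProjection_mul_iff,
    Submodule.orthogonal_starProjection_mul_mul_starProjection_eq_zero_iff,
    Submodule.starProjection_mul_mul_orthogonal_starProjection_eq_zero_iff,
    memHinf_conjLp_iff_hardy_orthogonal_mem_invtSubmodule, memHinf_iff_hardy_mem_invtSubmodule,
    and_comm]

/-- For nondegenerate `{a,b}` and `{ã,b̃}`: `Σ_{a,b} Σ_{ã,b̃} = Σ_{aã, bb̃}` iff
`a ∈ conj(H^∞)` and `b ∈ H^∞`. -/
theorem statement6 (a b ta tb : Linf)
    (h1 : Nondegenerate a b) (h2 : Nondegenerate ta tb) :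
    (pairedSigma a b).comp (pairedSigma ta tb) = pairedSigma (mulInf a ta) (mulInf b tb)
      ↔ MemHinf (conjLp a) ∧ MemHinf b :=
  statement6_general a b ta tb h2

end
end

section
/- Let η ∈ L^∞(T), {a,b} nondegenerate, and f ∈ L^2(T). Write f_± = P^± f. Then η · S_{a,b} f = S_{a,b}(η f) if and only if η f_+ ∈ H^2 and η f_− ∈ conj(H^2_0); and this in turn is equivalent to η f_+ = P^+(η f), and also equivalent to η f_− = P^−(η f). -/
open MeasureTheory Complex Real AddCircle
open scoped ENNReal ComplexConjugate

noncomputable section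

/-! With `u = η f₊ - P⁺(η f)` one has `η f₋ - P⁻(η f) = -u`, so
`η S_{a,b} f - S_{a,b}(η f) = a u - b u = (a - b) u`. As `a - b ≠ 0` a.e., the two operators
agree at `f` iff `u = 0`, i.e. iff `η f = η f₊ + η f₋` is the orthogonal decomposition of `η f`
along `H² ⊕ (H²)ᗮ`. -/

lemma mult_apply (a : Linf) (f : L2) : Mult a f = mul2 a f := rfl

lemma mul2_comm (a c : Linf) (f : L2) : mul2 a (mul2 c f) = mul2 c (mul2 a f) := by
  refine Lp.ext ?_
  filter_upwards [mul2_coe a (mul2 c f), mul2_coe c (mul2 a f), mul2_coe c f,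
    mul2_coe a f] with x h1 h2 h3 h4
  rw [h1, h2, h3, h4, mul_left_comm]

lemma mul2_eq_mul2_iff {a b : Linf} (hab : ∀ᵐ x ∂μT, a x - b x ≠ 0) {u : L2} :
    mul2 a u = mul2 b u ↔ u = 0 := by
  refine ⟨fun hu => Lp.ext ?_, fun hu => by simp only [hu, ← mult_apply, map_zero]⟩
  filter_upwards [mul2_coe a u, mul2_coe b u, Lp.ext_iff.mp hu, hab, Lp.coeFn_zero ℂ 2 μT]
    with x ha hb hab_u hne h0
  rw [ha, hb, ← sub_eq_zero, ← sub_mul] at hab_u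
  rw [h0]
  exact (mul_eq_zero.mp hab_u).resolve_left hne

lemma Pminus_apply (g : L2) : Pminus g = g - Pplus g := rfl

lemma pairedS_apply (a b : Linf) (g : L2) :
    pairedS a b g = mul2 a (Pplus g) + mul2 b (Pminus g) := rfl

lemma mul2_Pplus_add_mul2_Pminus (η : Linf) (f : L2) :
    mul2 η (Pplus f) + mul2 η (Pminus f) = mul2 η f := by
  rw [← mult_apply, ← mult_apply, ← map_add, Pminus_apply, add_sub_cancel, mult_apply]

lemma mul2_pairedS_sub_pairedS_mul2 (η a b : Linf) (f : L2) :
    mul2 η (pairedS a b f) - pairedS a b (mul2 η f)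
      = mul2 a (mul2 η (Pplus f) - Pplus (mul2 η f))
        - mul2 b (mul2 η (Pplus f) - Pplus (mul2 η f)) := by
  simp only [pairedS_apply, Pminus_apply, ← mult_apply, map_add, map_sub]
  simp only [mult_apply, mul2_comm η]
  abel

lemma mul2_pairedS_eq_iff (η : Linf) {a b : Linf} (hab : ∀ᵐ x ∂μT, a x - b x ≠ 0) (f : L2) :
    mul2 η (pairedS a b f) = pairedS a b (mul2 η f) ↔ mul2 η (Pplus f) = Pplus (mul2 η f) := by
  rw [← sub_eq_zero, mul2_pairedS_sub_pairedS_mul2, sub_eq_zero, mul2_eq_mul2_iff hab,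
    sub_eq_zero]

lemma eq_Pplus_iff_mem_Hardy {p q g : L2} (hg : p + q = g) :
    p = Pplus g ↔ p ∈ Hardy ∧ q ∈ Hardyᗮ := by
  obtain rfl : q = g - p := eq_sub_of_add_eq' hg
  refine ⟨fun hp => ⟨hp ▸ SetLike.coe_mem _, ?_⟩, fun ⟨hp, hq⟩ =>
    (Submodule.eq_starProjection_of_mem_orthogonal hp hq).symm⟩
  rw [hp]
  exact Submodule.sub_starProjection_mem_orthogonal g

lemma eq_Pplus_iff_eq_Pminus {p q g : L2} (hg : p + q = g) :
    p = Pplus g ↔ q = Pminus g := by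
  rw [Pminus_apply, ← hg, eq_sub_iff_add_eq, add_comm q, add_left_inj, eq_comm]

/-- For `η ∈ L^∞`, nondegenerate `{a,b}` and `f ∈ L²` with `f_± = P^± f`:
`η · S_{a,b} f = S_{a,b}(η f)` iff `η f₊ ∈ H²` and `η f₋ ∈ (H²)^⊥`; and this is also
equivalent to `η f₊ = P⁺(η f)`, and to `η f₋ = P⁻(η f)`. -/
theorem statement9 (η a b : Linf) (h : Nondegenerate a b) (f : L2) :
    ((mul2 η (pairedS a b f) = pairedS a b (mul2 η f))
        ↔ (mul2 η (Pplus f) ∈ Hardy ∧ mul2 η (Pminus f) ∈ Hardyᗮ))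
    ∧ ((mul2 η (pairedS a b f) = pairedS a b (mul2 η f))
        ↔ mul2 η (Pplus f) = Pplus (mul2 η f))
    ∧ ((mul2 η (pairedS a b f) = pairedS a b (mul2 η f))
        ↔ mul2 η (Pminus f) = Pminus (mul2 η f)) := by
  have hsplit := mul2_Pplus_add_mul2_Pminus η f
  rw [mul2_pairedS_eq_iff η h.2.2 f]
  exact ⟨eq_Pplus_iff_mem_Hardy hsplit, Iff.rfl, eq_Pplus_iff_eq_Pminus hsplit⟩

end
end
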